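/- arXiv:2310.05685 — 9 statements merged into one kernel-verified Lean document; each statement's English description precedes it below -/
import Mathlib

section
/- Let A ∈ ℝ^{m×n}, b ∈ ℝ^m, η ∈ ℝⁿ nonzero, c = η/‖η‖², and for y ∈ ℝⁿ set z = (Iₙ - cηᵀ)y. Then Ay ≤ b holds if and only if ν⁻(z) ≤ ηᵀy ≤ ν⁺(z) and ν⁰(z) ≥ 0, where ν⁻(z) = max over j with (Ac)ⱼ < 0 of (bⱼ - (Az)ⱼ)/(Ac)ⱼ, ν⁺(z) = min over j with (Ac)ⱼ > 0 of (bⱼ - (Az)ⱼ)/(Ac)ⱼ, and ν⁰(z) = min over j with (Ac)ⱼ = 0 of (bⱼ - (Az)ⱼ). -/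
open Matrix Finset

/-- Decomposition of the polyhedron `{y : Ay ≤ b}` along the line `y = z + c u`:
with `c = η/‖η‖²` and `z = (I - cηᵀ)y`, the condition `Ay ≤ b` holds iff
`ν⁻(z) ≤ ηᵀy ≤ ν⁺(z)` and `ν⁰(z) ≥ 0`, where the three quantities are the max/min
of `(bⱼ - (Az)ⱼ)/(Ac)ⱼ` (resp. `bⱼ - (Az)ⱼ`) over `j` with `(Ac)ⱼ` negative, positive,
or zero (each index set assumed nonempty). -/
theorem polyhedron_iff_truncation
    (m n : ℕ) (A : Matrix (Fin m) (Fin n) ℝ) (b : Fin m → ℝ)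
    (η : Fin n → ℝ) (hη : η ≠ 0)
    (c : Fin n → ℝ) (hc : c = (∑ i, η i ^ 2)⁻¹ • η)
    (y z : Fin n → ℝ) (hz : z = y - (η ⬝ᵥ y) • c)
    (hneg : (Finset.univ.filter fun j => (A.mulVec c) j < 0).Nonempty)
    (hpos : (Finset.univ.filter fun j => 0 < (A.mulVec c) j).Nonempty)
    (hzero : (Finset.univ.filter fun j => (A.mulVec c) j = 0).Nonempty) :
    (∀ j, A.mulVec y j ≤ b j) ↔
      ((Finset.univ.filter fun j => (A.mulVec c) j < 0).sup' hneg
          (fun j => (b j - A.mulVec z j) / A.mulVec c j) ≤ η ⬝ᵥ y ∧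
        η ⬝ᵥ y ≤ (Finset.univ.filter fun j => 0 < (A.mulVec c) j).inf' hpos
          (fun j => (b j - A.mulVec z j) / A.mulVec c j) ∧
        0 ≤ (Finset.univ.filter fun j => (A.mulVec c) j = 0).inf' hzero
          (fun j => b j - A.mulVec z j)) := by
  set u : ℝ := η ⬝ᵥ y with hu
  have hy : y = z + u • c := by rw [hz, sub_add_cancel]
  have key : ∀ j, A.mulVec y j = A.mulVec z j + u * A.mulVec c j := by
    intro j
    rw [hy]
    simp [Matrix.mulVec_add, Matrix.mulVec_smul, smul_eq_mul]
  constructor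
  · intro h
    refine ⟨?_, ?_, ?_⟩
    · apply Finset.sup'_le
      intro j hj
      rw [Finset.mem_filter] at hj
      have hj' := h j
      rw [key j] at hj'
      rw [div_le_iff_of_neg hj.2]
      linarith
    · apply Finset.le_inf'
      intro j hj
      rw [Finset.mem_filter] at hj
      have hj' := h j
      rw [key j] at hj'
      rw [le_div_iff₀ hj.2]
      linarith
    · apply Finset.le_inf'
      intro j hj
      rw [Finset.mem_filter] at hj
      have hj' := h j
      rw [key j, hj.2, mul_zero] at hj'
      linarith
  · rintro ⟨h1, h2, h3⟩ j
    rw [key j]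
    rcases lt_trichotomy (A.mulVec c j) 0 with hlt | heq | hgt
    · have : (b j - A.mulVec z j) / A.mulVec c j ≤ u :=
        le_trans (Finset.le_sup' (f := fun j => (b j - A.mulVec z j) / A.mulVec c j) (Finset.mem_filter.mpr ⟨Finset.mem_univ j, hlt⟩)) h1
      rw [div_le_iff_of_neg hlt] at this
      linarith
    · have : 0 ≤ b j - A.mulVec z j :=
        le_trans h3 (Finset.inf'_le (f := fun j => b j - A.mulVec z j) (Finset.mem_filter.mpr ⟨Finset.mem_univ j, heq⟩))
      rw [heq, mul_zero]
      linarith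
    · have : u ≤ (b j - A.mulVec z j) / A.mulVec c j :=
        le_trans h2 (Finset.inf'_le (f := fun j => (b j - A.mulVec z j) / A.mulVec c j) (Finset.mem_filter.mpr ⟨Finset.mem_univ j, hgt⟩))
      rw [le_div_iff₀ hgt] at this
      linarith
end

section
/- For the truncated normal distribution function F_μ(x) = (Ψ((x−μ)/σ) − Ψ((a−μ)/σ)) / (Ψ((b−μ)/σ) − Ψ((a−μ)/σ)) on a fixed interval [a,b] with a < x < b, the map μ ↦ F_μ(x) is strictly monotone decreasing in μ ∈ ℝ. -/
open Real MeasureTheory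

/-- The standard normal distribution function. -/
noncomputable def stdNormalCDF (t : ℝ) : ℝ :=
  ∫ x in Set.Iic t, Real.exp (-x ^ 2 / 2) / Real.sqrt (2 * Real.pi)

namespace TruncAux

/-- The standard normal density. -/
noncomputable def φ (t : ℝ) : ℝ := Real.exp (-t ^ 2 / 2) / Real.sqrt (2 * Real.pi)

lemma φ_pos (t : ℝ) : 0 < φ t :=
  div_pos (Real.exp_pos _) (Real.sqrt_pos.2 (by positivity))

lemma φ_cont : Continuous φ := by
  unfold φ; fun_prop

lemma φ_integrable : Integrable φ := by
  have h := (integrable_exp_neg_mul_sq (by norm_num : (0:ℝ) < 1/2)).div_const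
    (Real.sqrt (2 * Real.pi))
  refine h.congr (Filter.Eventually.of_forall fun t => ?_)
  unfold φ
  ring_nf

lemma cdf_sub (p q : ℝ) : stdNormalCDF q - stdNormalCDF p = ∫ t in p..q, φ t := by
  unfold stdNormalCDF
  exact intervalIntegral.integral_Iic_sub_Iic φ_integrable.integrableOn φ_integrable.integrableOn

lemma φ_shift (t h : ℝ) : φ (t + h) = φ t * Real.exp (-(t * h) - h ^ 2 / 2) := by
  unfold φ
  rw [show -(t + h) ^ 2 / 2 = -t ^ 2 / 2 + (-(t * h) - h ^ 2 / 2) by ring, Real.exp_add]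
  ring

lemma key (p q r h : ℝ) (hpq : p < q) (hqr : q < r) (hh : h < 0) :
    (stdNormalCDF (q + h) - stdNormalCDF (p + h)) /
        (stdNormalCDF (r + h) - stdNormalCDF (p + h)) <
      (stdNormalCDF q - stdNormalCDF p) / (stdNormalCDF r - stdNormalCDF p) := by
  set c := Real.exp (-(q * h) - h ^ 2 / 2) with hc
  have hc0 : 0 < c := Real.exp_pos _
  have intφ : ∀ u v : ℝ, IntervalIntegrable φ volume u v :=
    fun u v => φ_cont.intervalIntegrable u v
  have intφh : ∀ u v : ℝ, IntervalIntegrable (fun t => φ (t + h)) volume u v :=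
    fun u v => (φ_cont.comp (by fun_prop)).intervalIntegrable u v
  set B := ∫ t in p..q, φ t with hB
  set A := ∫ t in q..r, φ t with hA
  set B' := ∫ t in p..q, φ (t + h) with hB'
  set A' := ∫ t in q..r, φ (t + h) with hA'
  have hBpos : 0 < B :=
    intervalIntegral.intervalIntegral_pos_of_pos_on (intφ p q) (fun x _ => φ_pos x) hpq
  have hApos : 0 < A :=
    intervalIntegral.intervalIntegral_pos_of_pos_on (intφ q r) (fun x _ => φ_pos x) hqr
  have hB'pos : 0 < B' :=
    intervalIntegral.intervalIntegral_pos_of_pos_on (intφh p q) (fun x _ => φ_pos _) hpq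
  have hA'pos : 0 < A' :=
    intervalIntegral.intervalIntegral_pos_of_pos_on (intφh q r) (fun x _ => φ_pos _) hqr
  -- A' > c * A
  have hAc : c * A < A' := by
    have hpos : 0 < ∫ t in q..r, (φ (t + h) - c * φ t) := by
      refine intervalIntegral.intervalIntegral_pos_of_pos_on
        ((intφh q r).sub ((intφ q r).const_mul c)) (fun t ht => ?_) hqr
      rw [sub_pos, φ_shift, hc, mul_comm c]
      refine mul_lt_mul_of_pos_left ?_ (φ_pos t)
      exact Real.exp_lt_exp.2 (by nlinarith [ht.1])
    rw [intervalIntegral.integral_sub (intφh q r) ((intφ q r).const_mul c),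
      intervalIntegral.integral_const_mul] at hpos
    rw [← hA, ← hA'] at hpos
    linarith
  -- B' < c * B
  have hBc : B' < c * B := by
    have hpos : 0 < ∫ t in p..q, (c * φ t - φ (t + h)) := by
      refine intervalIntegral.intervalIntegral_pos_of_pos_on
        (((intφ p q).const_mul c).sub (intφh p q)) (fun t ht => ?_) hpq
      rw [sub_pos, φ_shift, hc, mul_comm c]
      refine mul_lt_mul_of_pos_left ?_ (φ_pos t)
      exact Real.exp_lt_exp.2 (by nlinarith [ht.2])
    rw [intervalIntegral.integral_sub ((intφ p q).const_mul c) (intφh p q),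
      intervalIntegral.integral_const_mul] at hpos
    rw [← hB, ← hB'] at hpos
    linarith
  -- rewrite the goal
  have e1 : stdNormalCDF (q + h) - stdNormalCDF (p + h) = B' := by
    rw [cdf_sub, hB', intervalIntegral.integral_comp_add_right]
  have e2 : stdNormalCDF (r + h) - stdNormalCDF (p + h) = A' + B' := by
    rw [hA', hB', intervalIntegral.integral_comp_add_right,
      intervalIntegral.integral_comp_add_right, cdf_sub,
      ← intervalIntegral.integral_add_adjacent_intervals (intφ (p+h) (q+h)) (intφ (q+h) (r+h))]
    ring
  have e3 : stdNormalCDF q - stdNormalCDF p = B := cdf_sub p q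
  have e4 : stdNormalCDF r - stdNormalCDF p = A + B := by
    rw [hA, hB, cdf_sub,
      ← intervalIntegral.integral_add_adjacent_intervals (intφ p q) (intφ q r)]
    ring
  rw [e1, e2, e3, e4, div_lt_div_iff₀ (by linarith) (by linarith)]
  nlinarith [mul_lt_mul_of_pos_left hAc hBpos, mul_lt_mul_of_pos_right hBc hApos]

end TruncAux

/-- The truncated-normal distribution function
`F_μ(x) = (Ψ((x−μ)/σ) − Ψ((a−μ)/σ)) / (Ψ((b−μ)/σ) − Ψ((a−μ)/σ))` on a fixed interval
`[a,b]`, evaluated at a fixed `x ∈ (a,b)`, is strictly decreasing in `μ`. -/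
theorem truncated_normal_cdf_strictAnti (σ a b x : ℝ) (hσ : 0 < σ) (hab : a < b)
    (hx : x ∈ Set.Ioo a b) :
    StrictAnti (fun μ : ℝ =>
      (stdNormalCDF ((x - μ) / σ) - stdNormalCDF ((a - μ) / σ)) /
        (stdNormalCDF ((b - μ) / σ) - stdNormalCDF ((a - μ) / σ))) := by
  intro μ₁ μ₂ hμ
  simp only
  have hsh : ∀ y : ℝ, (y - μ₂) / σ = (y - μ₁) / σ + (μ₁ - μ₂) / σ := fun y => by ring
  rw [hsh x, hsh a, hsh b]
  refine TruncAux.key ((a - μ₁) / σ) ((x - μ₁) / σ) ((b - μ₁) / σ) ((μ₁ - μ₂) / σ)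
    ?_ ?_ ?_
  · exact div_lt_div_of_pos_right (by linarith [hx.1]) hσ
  · exact div_lt_div_of_pos_right (by linarith [hx.2]) hσ
  · exact div_neg_of_neg_of_pos (by linarith) hσ
end

section
/- If a family of positive densities f_μ on ℝ has the strict monotone likelihood ratio property (μ < λ and y < z imply f_λ(z)f_μ(y) > f_λ(y)f_μ(z)), then the corresponding distribution functions satisfy F_μ(x) > F_λ(x) for all x in the interior of the support whenever μ < λ. -/
open MeasureTheory Set

/-- If a family of probability densities `f μ`, positive on a common open interval `(a,b)`
and vanishing outside it, has the strict monotone likelihood ratio property, then the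
distribution functions `F_μ(x) = ∫_{-∞}^x f_μ` satisfy `F_μ(x) > F_λ(x)` for all `x` in
the interior of the support whenever `μ < λ`. -/
theorem strict_mlr_implies_cdf_strict_order
    (f : ℝ → ℝ → ℝ) (a b : ℝ) (hab : a < b)
    (hpos : ∀ μ, ∀ x ∈ Set.Ioo a b, 0 < f μ x)
    (hsupp : ∀ μ, ∀ x, x ∉ Set.Ioo a b → f μ x = 0)
    (hint : ∀ μ, MeasureTheory.Integrable (f μ))
    (hdens : ∀ μ, ∫ x, f μ x = 1)
    (hmlr : ∀ μ l : ℝ, μ < l → ∀ y ∈ Set.Ioo a b, ∀ z ∈ Set.Ioo a b, y < z →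
      f l z * f μ y > f l y * f μ z)
    (μ l : ℝ) (hμl : μ < l) :
    ∀ x ∈ Set.Ioo a b, (∫ t in Set.Iic x, f l t) < ∫ t in Set.Iic x, f μ t := by
  intro x hx
  obtain ⟨hax, hxb⟩ := hx
  have hind : ∀ ν, f ν = (Set.Ioo a b).indicator (f ν) := by
    intro ν; funext t
    by_cases ht : t ∈ Set.Ioo a b
    · exact (Set.indicator_of_mem ht (f ν)).symm
    · rw [Set.indicator_of_notMem ht]; exact hsupp ν t ht
  -- restrict Iic x to Ioc a x
  have hIic : ∀ ν, (∫ t in Set.Iic x, f ν t) = ∫ t in Set.Ioc a x, f ν t := by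
    intro ν
    have hset : Set.Iic x ∩ Set.Ioo a b = Set.Ioc a x := by
      ext t
      simp only [Set.mem_inter_iff, Set.mem_Iic, Set.mem_Ioo, Set.mem_Ioc]
      constructor
      · rintro ⟨h1, h2, h3⟩; exact ⟨h2, h1⟩
      · rintro ⟨h1, h2⟩; exact ⟨h2, h1, lt_of_le_of_lt h2 hxb⟩
    conv_lhs => rw [hind ν]
    rw [MeasureTheory.setIntegral_indicator measurableSet_Ioo, hset]
  -- restrict Ioi x to Ioo x b
  have hIoi : ∀ ν, (∫ t in Set.Ioi x, f ν t) = ∫ t in Set.Ioo x b, f ν t := by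
    intro ν
    have hset : Set.Ioi x ∩ Set.Ioo a b = Set.Ioo x b := by
      ext t
      simp only [Set.mem_inter_iff, Set.mem_Ioi, Set.mem_Ioo]
      constructor
      · rintro ⟨h1, h2, h3⟩; exact ⟨h1, h3⟩
      · rintro ⟨h1, h2⟩; exact ⟨h1, lt_trans hax h1, h2⟩
    conv_lhs => rw [hind ν]
    rw [MeasureTheory.setIntegral_indicator measurableSet_Ioo, hset]
  set A : ℝ := ∫ t in Set.Iic x, f l t with hA
  set B : ℝ := ∫ t in Set.Iic x, f μ t with hB
  have hsplit : ∀ ν, (∫ t in Set.Iic x, f ν t) + ∫ t in Set.Ioi x, f ν t = 1 := by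
    intro ν
    rw [intervalIntegral.integral_Iic_add_Ioi (hint ν).integrableOn (hint ν).integrableOn]
    exact hdens ν
  have hIoil : (∫ t in Set.Ioo x b, f l t) = 1 - A := by
    rw [← hIoi]; have := hsplit l; linarith
  have hIoim : (∫ t in Set.Ioo x b, f μ t) = 1 - B := by
    rw [← hIoi]; have := hsplit μ; linarith
  -- Step 1: pointwise in z on (x,b): f μ z * A < f l z * B
  have step1 : ∀ z ∈ Set.Ioo x b, f μ z * A < f l z * B := by
    intro z hz
    have hz1 : z ∈ Set.Ioo a b := ⟨lt_trans hax hz.1, hz.2⟩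
    have key : 0 < ∫ y in Set.Ioc a x, (f l z * f μ y - f μ z * f l y) := by
      have hintg : MeasureTheory.IntegrableOn
          (fun y => f l z * f μ y - f μ z * f l y) (Set.Ioc a x) := by
        exact (((hint μ).const_mul _).sub ((hint l).const_mul _)).integrableOn
      have hnn : 0 ≤ᵐ[volume.restrict (Set.Ioc a x)]
          fun y => f l z * f μ y - f μ z * f l y := by
        filter_upwards [ae_restrict_mem measurableSet_Ioc] with y hy
        have hy1 : y ∈ Set.Ioo a b := ⟨hy.1, lt_of_le_of_lt hy.2 hxb⟩
        have := hmlr μ l hμl y hy1 z hz1 (lt_of_le_of_lt hy.2 hz.1)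
        simp only [Pi.zero_apply]
        linarith
      rw [MeasureTheory.setIntegral_pos_iff_support_of_nonneg_ae hnn hintg]
      have hsub : Set.Ioc a x ⊆ Function.support (fun y => f l z * f μ y - f μ z * f l y) := by
        intro y hy
        have hy1 : y ∈ Set.Ioo a b := ⟨hy.1, lt_of_le_of_lt hy.2 hxb⟩
        have := hmlr μ l hμl y hy1 z hz1 (lt_of_le_of_lt hy.2 hz.1)
        simp only [Function.mem_support]
        intro h; rw [sub_eq_zero] at h; linarith
      have : Function.support (fun y => f l z * f μ y - f μ z * f l y) ∩ Set.Ioc a x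
          = Set.Ioc a x := Set.inter_eq_self_of_subset_right hsub
      rw [this, Real.volume_Ioc]
      simp [hax]
    have hcalc : (∫ y in Set.Ioc a x, (f l z * f μ y - f μ z * f l y))
        = f l z * B - f μ z * A := by
      rw [MeasureTheory.integral_sub (((hint μ).const_mul _).integrableOn)
        (((hint l).const_mul _).integrableOn),
        MeasureTheory.integral_const_mul, MeasureTheory.integral_const_mul,
        hA, hB, hIic μ, hIic l]
    rw [hcalc] at key
    linarith
  -- Step 2: integrate over z ∈ (x,b)
  have key2 : 0 < ∫ z in Set.Ioo x b, (f l z * B - f μ z * A) := by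
    have hintg : MeasureTheory.IntegrableOn
        (fun z => f l z * B - f μ z * A) (Set.Ioo x b) := by
      exact (((hint l).mul_const _).sub ((hint μ).mul_const _)).integrableOn
    have hnn : 0 ≤ᵐ[volume.restrict (Set.Ioo x b)]
        fun z => f l z * B - f μ z * A := by
      filter_upwards [ae_restrict_mem measurableSet_Ioo] with z hz
      have := step1 z hz
      simp only [Pi.zero_apply]
      linarith
    rw [MeasureTheory.setIntegral_pos_iff_support_of_nonneg_ae hnn hintg]
    have hsub : Set.Ioo x b ⊆ Function.support (fun z => f l z * B - f μ z * A) := by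
      intro z hz
      have := step1 z hz
      simp only [Function.mem_support]
      intro h; rw [sub_eq_zero] at h; linarith
    have : Function.support (fun z => f l z * B - f μ z * A) ∩ Set.Ioo x b
        = Set.Ioo x b := Set.inter_eq_self_of_subset_right hsub
    rw [this, Real.volume_Ioo]
    simp [hxb]
  have hcalc2 : (∫ z in Set.Ioo x b, (f l z * B - f μ z * A))
      = (1 - A) * B - (1 - B) * A := by
    rw [MeasureTheory.integral_sub (((hint l).mul_const _).integrableOn)
      (((hint μ).mul_const _).integrableOn),
      MeasureTheory.integral_mul_const, MeasureTheory.integral_mul_const,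
      hIoil, hIoim]
  rw [hcalc2] at key2
  have hAB : A < B := by nlinarith
  exact hAB
end

section
/- In Forward Stepwise regression, for j, j_k ∉ M_{k-1}, the inequality ‖q_{j_k,k-1}‖² ≤ ‖q_{j,k-1}‖² holds if and only if |X_{j_k}ᵀ P^⊥_{k-1} y| / ‖P^⊥_{k-1}X_{j_k}‖ ≥ |X_jᵀ P^⊥_{k-1} y| / ‖P^⊥_{k-1}X_j‖, which in turn is equivalent to the two linear inequalities s_k (X_{j_k}ᵀP^⊥_{k-1}/‖P^⊥_{k-1}X_{j_k}‖) y ≥ ± (X_jᵀP^⊥_{k-1}/‖P^⊥_{k-1}X_j‖) y, where s_k = sign(X_{j_k}ᵀ P^⊥_{k-1} y). -/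
open Matrix

private lemma aux_dot {n : ℕ} (P : Matrix (Fin n) (Fin n) ℝ) (hsym : Pᵀ = P)
    (x w : Fin n → ℝ) : (P.mulVec x) ⬝ᵥ w = x ⬝ᵥ (P.mulVec w) := by
  conv_lhs => rw [← hsym, mulVec_transpose]
  rw [← dotProduct_mulVec]

/-- Forward stepwise selection criterion: `‖q_{j_k}‖² ≤ ‖q_j‖²` iff
`|X_{j_k}ᵀ P^⊥ y|/‖P^⊥X_{j_k}‖ ≥ |X_jᵀ P^⊥ y|/‖P^⊥X_j‖`, which is itself equivalent to
the two linear inequalities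
`s_k (X_{j_k}ᵀP^⊥/‖P^⊥X_{j_k}‖) y ≥ ± (X_jᵀP^⊥/‖P^⊥X_j‖) y`,
where `s_k = sign(X_{j_k}ᵀ P^⊥ y)`. -/
theorem forward_stepwise_selection_iff (n : ℕ)
    (Pperp : Matrix (Fin n) (Fin n) ℝ) (hsym : Pperpᵀ = Pperp)
    (hidem : Pperp * Pperp = Pperp)
    (Xj Xjk y : Fin n → ℝ)
    (vj vk : Fin n → ℝ) (hvj : vj = Pperp.mulVec Xj) (hvk : vk = Pperp.mulVec Xjk)
    (hvj0 : vj ≠ 0) (hvk0 : vk ≠ 0)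
    (r : Fin n → ℝ) (hr : r = Pperp.mulVec y)
    (hne : Xjk ⬝ᵥ r ≠ 0)
    (sk : ℝ) (hsk : sk = Real.sign (Xjk ⬝ᵥ r))
    (qj qk : Fin n → ℝ)
    (hqj : qj = r - ((vj ⬝ᵥ r) / (vj ⬝ᵥ vj)) • vj)
    (hqk : qk = r - ((vk ⬝ᵥ r) / (vk ⬝ᵥ vk)) • vk) :
    ((qk ⬝ᵥ qk ≤ qj ⬝ᵥ qj) ↔
      |Xjk ⬝ᵥ r| / Real.sqrt (vk ⬝ᵥ vk) ≥ |Xj ⬝ᵥ r| / Real.sqrt (vj ⬝ᵥ vj)) ∧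
    ((|Xjk ⬝ᵥ r| / Real.sqrt (vk ⬝ᵥ vk) ≥ |Xj ⬝ᵥ r| / Real.sqrt (vj ⬝ᵥ vj)) ↔
      (sk * (vk ⬝ᵥ y) / Real.sqrt (vk ⬝ᵥ vk) ≥ (vj ⬝ᵥ y) / Real.sqrt (vj ⬝ᵥ vj) ∧
        sk * (vk ⬝ᵥ y) / Real.sqrt (vk ⬝ᵥ vk) ≥ -((vj ⬝ᵥ y) / Real.sqrt (vj ⬝ᵥ vj)))) := by
  have hPr : Pperp.mulVec r = r := by
    rw [hr, mulVec_mulVec, hidem]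
  -- dot products rewritten
  have hjy : vj ⬝ᵥ y = Xj ⬝ᵥ r := by rw [hvj, aux_dot _ hsym, ← hr]
  have hky : vk ⬝ᵥ y = Xjk ⬝ᵥ r := by rw [hvk, aux_dot _ hsym, ← hr]
  have hjr : vj ⬝ᵥ r = Xj ⬝ᵥ r := by rw [hvj, aux_dot _ hsym, hPr]
  have hkr : vk ⬝ᵥ r = Xjk ⬝ᵥ r := by rw [hvk, aux_dot _ hsym, hPr]
  set a := Xj ⬝ᵥ r with ha
  set b := Xjk ⬝ᵥ r with hb
  set A := vj ⬝ᵥ vj with hA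
  set B := vk ⬝ᵥ vk with hB
  have hnn : ∀ v : Fin n → ℝ, 0 ≤ v ⬝ᵥ v := fun v =>
    Finset.sum_nonneg fun i _ => mul_self_nonneg (v i)
  have hApos : 0 < A := by
    rcases (hnn vj).lt_or_eq with h | h
    · exact h
    · exact absurd (dotProduct_self_eq_zero.mp h.symm) hvj0
  have hBpos : 0 < B := by
    rcases (hnn vk).lt_or_eq with h | h
    · exact h
    · exact absurd (dotProduct_self_eq_zero.mp h.symm) hvk0
  have hsA : 0 < Real.sqrt A := Real.sqrt_pos.mpr hApos
  have hsB : 0 < Real.sqrt B := Real.sqrt_pos.mpr hBpos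
  -- norm of residuals
  have hqjn : qj ⬝ᵥ qj = r ⬝ᵥ r - a ^ 2 / A := by
    rw [hqj]
    simp only [sub_dotProduct, dotProduct_sub, smul_dotProduct, dotProduct_smul,
      smul_eq_mul, hjr, ← hA, dotProduct_comm r vj, hjr]
    field_simp
    ring
  have hqkn : qk ⬝ᵥ qk = r ⬝ᵥ r - b ^ 2 / B := by
    rw [hqk]
    simp only [sub_dotProduct, dotProduct_sub, smul_dotProduct, dotProduct_smul,
      smul_eq_mul, hkr, ← hB, dotProduct_comm r vk, hkr]
    field_simp
    ring
  have habs : ∀ (c C : ℝ), 0 < C → |c| / Real.sqrt C = Real.sqrt (c ^ 2 / C) := by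
    intro c C hC
    rw [Real.sqrt_div (sq_nonneg c), Real.sqrt_sq_eq_abs]
  constructor
  · rw [hqjn, hqkn, ge_iff_le, habs a A hApos, habs b B hBpos,
      Real.sqrt_le_sqrt_iff (by positivity)]
    constructor
    · intro h; linarith
    · intro h; linarith
  · have hsb : sk * (vk ⬝ᵥ y) = |b| := by
      rw [hky, hsk]
      rcases lt_or_gt_of_ne hne with h | h
      · rw [Real.sign_of_neg h, abs_of_neg h]; ring
      · rw [Real.sign_of_pos h, abs_of_pos h]; ring
    rw [hsb, hjy]
    have h2 : |a| / Real.sqrt A = |a / Real.sqrt A| := by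
      rw [abs_div, abs_of_pos hsA]
    rw [ge_iff_le, ge_iff_le, ge_iff_le, h2, abs_le']
end

section
/- (LARS knot characterization) With r_k = r_{k-1} − (1 − λ_k/λ_{k-1})P_{k-1}r_{k-1}, X_{M_{k-1}}ᵀ r_{k-1} = λ_{k-1}s_{M_{k-1}}, and P^⊥_{k-1} r_{k-1} = P^⊥_{k-1} y, for j ∉ M_{k-1} the equation X_jᵀ r_k = s_k λ_k is equivalent to (X_jᵀ P^⊥_{k-1} y) / (s_k − X_jᵀ(X_{M_{k-1}}^+)ᵀ s_{M_{k-1}}) = λ_k, provided the denominator is nonzero. -/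
open Matrix

/-- LARS knot characterization: with `r_k = r_{k-1} - (1 - λ_k/λ_{k-1}) P_{k-1} r_{k-1}`,
`X_{M_{k-1}}ᵀ r_{k-1} = λ_{k-1} s_{M_{k-1}}`, and `P^⊥_{k-1} r_{k-1} = P^⊥_{k-1} y`,
for `j ∉ M_{k-1}` the equation `X_jᵀ r_k = s_k λ_k` is equivalent to
`(X_jᵀ P^⊥_{k-1} y) / (s_k - X_jᵀ (X_{M_{k-1}}^+)ᵀ s_{M_{k-1}}) = λ_k`,
provided the denominator is nonzero. -/
theorem lars_knot_characterization (n m : ℕ)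
    (XM : Matrix (Fin n) (Fin m) ℝ) (hXM : IsUnit (XMᵀ * XM).det)
    (P : Matrix (Fin n) (Fin n) ℝ) (hP : P = XM * (XMᵀ * XM)⁻¹ * XMᵀ)
    (y rkm1 : Fin n → ℝ)
    (hres : ((1 : Matrix (Fin n) (Fin n) ℝ) - P).mulVec rkm1
            = ((1 : Matrix (Fin n) (Fin n) ℝ) - P).mulVec y)
    (sM : Fin m → ℝ) (lamk1 : ℝ) (hlamk1 : 0 < lamk1)
    (hXr : XMᵀ.mulVec rkm1 = lamk1 • sM)
    (Xj : Fin n → ℝ) (sk lamk : ℝ)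
    (d : ℝ) (hd : d = sk - Xj ⬝ᵥ (XM * (XMᵀ * XM)⁻¹).mulVec sM) (hd0 : d ≠ 0)
    (rk : Fin n → ℝ) (hrk : rk = rkm1 - (1 - lamk / lamk1) • P.mulVec rkm1) :
    Xj ⬝ᵥ rk = sk * lamk ↔
      (Xj ⬝ᵥ ((1 : Matrix (Fin n) (Fin n) ℝ) - P).mulVec y) / d = lamk := by
  have hl0 : lamk1 ≠ 0 := ne_of_gt hlamk1
  set a := Xj ⬝ᵥ (XM * (XMᵀ * XM)⁻¹).mulVec sM with ha
  set c := Xj ⬝ᵥ ((1 : Matrix (Fin n) (Fin n) ℝ) - P).mulVec y with hc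
  have key1 : P.mulVec rkm1 = lamk1 • (XM * (XMᵀ * XM)⁻¹).mulVec sM := by
    rw [hP, ← Matrix.mulVec_mulVec, hXr, Matrix.mulVec_smul]
  have hPa : Xj ⬝ᵥ P.mulVec rkm1 = lamk1 * a := by
    rw [key1, dotProduct_smul, smul_eq_mul]
  have hc1 : Xj ⬝ᵥ rkm1 = c + lamk1 * a := by
    have := congrArg (fun v => Xj ⬝ᵥ v) hres
    simp only [Matrix.sub_mulVec, Matrix.one_mulVec, dotProduct_sub] at this
    have hc2 : c = Xj ⬝ᵥ y - Xj ⬝ᵥ P.mulVec y := by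
      rw [hc]; simp [Matrix.sub_mulVec, Matrix.one_mulVec, dotProduct_sub]
    linarith [hPa]
  have heq : Xj ⬝ᵥ rk = c + lamk * a := by
    rw [hrk, dotProduct_sub, dotProduct_smul, smul_eq_mul, hPa, hc1]
    field_simp
    ring
  rw [heq, div_eq_iff hd0, hd]
  constructor <;> intro h <;> nlinarith [h]
end

section
/- (Significance Test statistic formula) Under the stated Lasso KKT conditions, the statistic T_k = (⟨y, Xβ̂(λ_{k+1})⟩ − ⟨y, X_{M_{k-1}}β̃_{M_{k-1}}(λ_{k+1})⟩)/σ² equals ω_k² λ_k(λ_k − λ_{k+1})/σ², where ω_k = ‖(X_{M_k}^+)ᵀ s_{M_k} − (X_{M_{k-1}}^+)ᵀ s_{M_{k-1}}‖₂. -/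
open Matrix

/-- Significance-Test statistic formula (Lemma 3 of Tibshirani et al.): under the Lasso
KKT / path-continuity conditions, the statistic
`T_k = (⟨y, Xβ̂(λ_{k+1})⟩ - ⟨y, X_{M_{k-1}}β̃(λ_{k+1})⟩)/σ²`
equals `ω_k² λ_k (λ_k - λ_{k+1})/σ²`, where
`ω_k = ‖(X_{M_k}^+)ᵀ s_{M_k} - (X_{M_{k-1}}^+)ᵀ s_{M_{k-1}}‖₂`.
Here `Pkm1, Pk` are the nested orthogonal projections, `w1 = (X_{M_{k-1}}^+)ᵀ s_{M_{k-1}}`,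
`w2 = (X_{M_k}^+)ᵀ s_{M_k}`. -/
theorem significance_test_statistic_formula (n : ℕ)
    (Pkm1 Pk : Matrix (Fin n) (Fin n) ℝ)
    (hs1 : Pkm1ᵀ = Pkm1) (hs2 : Pkᵀ = Pk)
    (hi1 : Pkm1 * Pkm1 = Pkm1) (hi2 : Pk * Pk = Pk)
    (hnest1 : Pk * Pkm1 = Pkm1) (hnest2 : Pkm1 * Pk = Pkm1)
    (y w1 w2 : Fin n → ℝ) (lamk lamk1 σ : ℝ) (hσ : 0 < σ) (hlamk : 0 < lamk)
    (hcont : Pkm1.mulVec y - lamk • w1 = Pk.mulVec y - lamk • w2)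
    (xhat xtil : Fin n → ℝ)
    (hxhat : xhat = Pk.mulVec y - lamk1 • w2)
    (hxtil : xtil = Pkm1.mulVec y - lamk1 • w1)
    (Tk : ℝ) (hTk : Tk = ((y ⬝ᵥ xhat) - (y ⬝ᵥ xtil)) / σ ^ 2)
    (ωk : ℝ) (hω : ωk = Real.sqrt ((w2 - w1) ⬝ᵥ (w2 - w1))) :
    Tk = ωk ^ 2 * lamk * (lamk - lamk1) / σ ^ 2 := by
  set v : Fin n → ℝ := w2 - w1 with hvdef
  set Q : Matrix (Fin n) (Fin n) ℝ := Pk - Pkm1 with hQdef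
  have hQsym : Qᵀ = Q := by simp [hQdef, transpose_sub, hs1, hs2]
  have hQidem : Q * Q = Q := by
    simp only [hQdef, Matrix.sub_mul, Matrix.mul_sub, hi1, hi2, hnest1, hnest2]
    abel
  have hv : lamk • v = Q.mulVec y := by
    funext i
    have h := congrFun hcont i
    simp only [Pi.sub_apply, Pi.smul_apply, smul_eq_mul] at h
    simp only [hvdef, hQdef, Matrix.sub_mulVec, Pi.sub_apply, Pi.smul_apply, smul_eq_mul,
      mul_sub]
    linarith
  set u : Fin n → ℝ := Q.mulVec y with hudef
  have hQu : Q.mulVec u = u := by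
    rw [hudef, Matrix.mulVec_mulVec, hQidem]
  have huu : u ⬝ᵥ u = u ⬝ᵥ y := by
    calc u ⬝ᵥ u = u ⬝ᵥ Q.mulVec y := rfl
    _ = (u ᵥ* Q) ⬝ᵥ y := Matrix.dotProduct_mulVec u Q y
    _ = (Qᵀ.mulVec u) ⬝ᵥ y := by rw [Matrix.mulVec_transpose]
    _ = u ⬝ᵥ y := by rw [hQsym, hQu]
  -- translate to v
  have hu_v : u = lamk • v := hv.symm
  have key : y ⬝ᵥ v = lamk * (v ⬝ᵥ v) := by
    have h1 : (lamk • v) ⬝ᵥ (lamk • v) = (lamk • v) ⬝ᵥ y := by rw [← hu_v]; exact huu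
    rw [smul_dotProduct, dotProduct_smul, smul_dotProduct,
      smul_eq_mul, smul_eq_mul, smul_eq_mul] at h1
    have h2 : lamk * (lamk * (v ⬝ᵥ v)) = lamk * (y ⬝ᵥ v) := by
      rw [h1, dotProduct_comm]
    exact (mul_left_cancel₀ (ne_of_gt hlamk) h2).symm
  have hvv : ωk ^ 2 = v ⬝ᵥ v := by
    rw [hω]
    exact Real.sq_sqrt (Finset.sum_nonneg fun i _ => mul_self_nonneg _)
  have hdiff : xhat - xtil = (lamk - lamk1) • v := by
    rw [hxhat, hxtil]
    funext i
    have h := congrFun (hv.trans hudef) i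
    simp only [hQdef, Matrix.sub_mulVec, Pi.sub_apply, Pi.smul_apply, smul_eq_mul,
      hvdef] at h ⊢
    nlinarith [h]
  have hyd : y ⬝ᵥ xhat - y ⬝ᵥ xtil = (lamk - lamk1) * (y ⬝ᵥ v) := by
    rw [← dotProduct_sub, hdiff, dotProduct_smul, smul_eq_mul]
  rw [hTk, hyd, key, hvv]
  ring
end

section
/- If the Lasso solution path is continuous at λ_k, i.e. P_{k-1}y − λ_k(X_{M_{k-1}}ᵀ)^+s_{M_{k-1}} = P_k y − λ_k(X_{M_k}ᵀ)^+s_{M_k}, then yᵀ(P_k − P_{k-1})y = λ_k² ‖(X_{M_k}^+)ᵀ s_{M_k} − (X_{M_{k-1}}^+)ᵀ s_{M_{k-1}}‖₂², using that (P_k − P_{k-1})² = P_k − P_{k-1}. -/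
open Matrix

/-- If the Lasso solution path is continuous at `λ_k`, i.e.
`P_{k-1}y - λ_k (X_{M_{k-1}}ᵀ)^+ s_{M_{k-1}} = P_k y - λ_k (X_{M_k}ᵀ)^+ s_{M_k}`,
then `yᵀ(P_k - P_{k-1})y = λ_k² ‖(X_{M_k}^+)ᵀ s_{M_k} - (X_{M_{k-1}}^+)ᵀ s_{M_{k-1}}‖₂²`,
using `(P_k - P_{k-1})² = P_k - P_{k-1}` for the nested projections. Here
`w1 = (X_{M_{k-1}}^+)ᵀ s_{M_{k-1}}` and `w2 = (X_{M_k}^+)ᵀ s_{M_k}`. -/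
theorem lasso_path_continuity_quadratic (n : ℕ)
    (Pkm1 Pk : Matrix (Fin n) (Fin n) ℝ)
    (hs1 : Pkm1ᵀ = Pkm1) (hs2 : Pkᵀ = Pk)
    (hi1 : Pkm1 * Pkm1 = Pkm1) (hi2 : Pk * Pk = Pk)
    (hnest1 : Pk * Pkm1 = Pkm1) (hnest2 : Pkm1 * Pk = Pkm1)
    (y w1 w2 : Fin n → ℝ) (lamk : ℝ) (hlamk : 0 < lamk)
    (hcont : Pkm1.mulVec y - lamk • w1 = Pk.mulVec y - lamk • w2) :
    y ⬝ᵥ (Pk - Pkm1).mulVec y = lamk ^ 2 * ((w2 - w1) ⬝ᵥ (w2 - w1)) := by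
  set D := Pk - Pkm1 with hD
  have hDidem : D * D = D := by
    simp [hD, sub_mul, mul_sub, hi1, hi2, hnest1, hnest2]
  have hDsym : Dᵀ = D := by
    simp [hD, transpose_sub, hs1, hs2]
  have hDy : D.mulVec y = lamk • (w2 - w1) := by
    have : Pk.mulVec y - Pkm1.mulVec y = lamk • w2 - lamk • w1 := by
      have := hcont
      abel_nf at this ⊢
      linear_combination (norm := abel) -this
    simp [hD, sub_mulVec, this, smul_sub]
  calc y ⬝ᵥ D.mulVec y = y ⬝ᵥ (D * D).mulVec y := by rw [hDidem]
    _ = D.mulVec y ⬝ᵥ D.mulVec y := by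
        rw [← mulVec_mulVec, dotProduct_mulVec, ← hDsym, vecMul_transpose, hDsym]
    _ = lamk ^ 2 * ((w2 - w1) ⬝ᵥ (w2 - w1)) := by
        rw [hDy, smul_dotProduct, dotProduct_smul, smul_eq_mul, smul_eq_mul]
        ring
end

section
/- (Spacing Test weight) Let η = c_k(j_k,s_k) = P^⊥_{k-1}X_{j_k} / (s_k − X_{j_k}ᵀ(X_{M_{k-1}}^+)ᵀ s_{M_{k-1}}) and ω_k = ‖(X_{M_k}^+)ᵀ s_{M_k} − (X_{M_{k-1}}^+)ᵀ s_{M_{k-1}}‖₂. Then ‖η‖₂ = ω_k⁻¹; equivalently ω_k² = (s_k − s_{M_{k-1}}ᵀ X_{M_{k-1}}^+X_{j_k})² / (X_{j_k}ᵀP^⊥_{k-1}X_{j_k}). -/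
/-!
For a design `X` with invertible Gram matrix, `u = X (XᵀX)⁻¹ s` is the unique vector in the
column span of `X` with `Xᵀ u = s`. Let `r = P^⊥ x` be the residual of the new column `x`, so
that `Xᵀ r = 0` and `‖r‖² = xᵀ r =: q`. Then `u + c r` lies in the span of `[X, x]`, satisfies
`Xᵀ (u + c r) = s`, and `xᵀ (u + c r) = t` exactly for `c = d / q` with `d = t - xᵀ u`; so the
new vector is the old one plus `(d / q) r`. Hence `ω² = d² / q`, while `‖η‖² = ‖r‖² / d² = q / d²`.
-/

open Matrix

section LeastSquares

variable {ι κ R : Type*} [Fintype ι] [Fintype κ] [DecidableEq κ] [CommRing R]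

theorem mul_gram_inv_mulVec_eq_mulVec {X : Matrix ι κ R} (hX : IsUnit (Xᵀ * X).det)
    {w s : κ → R} (h : Xᵀ *ᵥ (X *ᵥ w) = s) :
    (X * (Xᵀ * X)⁻¹) *ᵥ s = X *ᵥ w := by
  rw [← mulVec_mulVec, ← h, mulVec_mulVec w Xᵀ X, mulVec_mulVec w (Xᵀ * X)⁻¹,
    nonsing_inv_mul _ hX, one_mulVec]

variable [DecidableEq ι]

theorem transpose_mul_one_sub_proj {X : Matrix ι κ R} (hX : IsUnit (Xᵀ * X).det) :
    Xᵀ * (1 - X * (Xᵀ * X)⁻¹ * Xᵀ) = 0 := by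
  rw [Matrix.mul_sub, Matrix.mul_one, ← Matrix.mul_assoc, ← Matrix.mul_assoc, mul_nonsing_inv _ hX,
    Matrix.one_mul, sub_self]

theorem one_sub_proj_mulVec (X : Matrix ι κ R) (x : ι → R) :
    (1 - X * (Xᵀ * X)⁻¹ * Xᵀ) *ᵥ x = x - X *ᵥ ((Xᵀ * X)⁻¹ *ᵥ (Xᵀ *ᵥ x)) := by
  rw [sub_mulVec, one_mulVec, mulVec_mulVec, mulVec_mulVec]

theorem dotProduct_self_one_sub_proj_mulVec {X : Matrix ι κ R} (hX : IsUnit (Xᵀ * X).det)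
    (x : ι → R) :
    (1 - X * (Xᵀ * X)⁻¹ * Xᵀ) *ᵥ x ⬝ᵥ (1 - X * (Xᵀ * X)⁻¹ * Xᵀ) *ᵥ x =
      x ⬝ᵥ (1 - X * (Xᵀ * X)⁻¹ * Xᵀ) *ᵥ x := by
  set r := (1 - X * (Xᵀ * X)⁻¹ * Xᵀ) *ᵥ x
  have hr : r = x - X *ᵥ ((Xᵀ * X)⁻¹ *ᵥ (Xᵀ *ᵥ x)) := one_sub_proj_mulVec X x
  have hres : Xᵀ *ᵥ r = 0 := by rw [mulVec_mulVec, transpose_mul_one_sub_proj hX, zero_mulVec]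
  clear_value r
  calc r ⬝ᵥ r = (x - X *ᵥ ((Xᵀ * X)⁻¹ *ᵥ (Xᵀ *ᵥ x))) ⬝ᵥ r := by rw [← hr]
    _ = x ⬝ᵥ r := by
      rw [sub_dotProduct, dotProduct_comm (X *ᵥ _), dotProduct_mulVec, ← mulVec_transpose, hres,
        zero_dotProduct, sub_zero]

end LeastSquares

section AppendColumn

variable {ι R : Type*} [CommSemiring R] {m : ℕ}
  {X : Matrix ι (Fin m) R} {x : ι → R} {Y : Matrix ι (Fin (m + 1)) R}

theorem mulVec_snoc_of_rows_eq_snoc (hY : ∀ i, Y i = Fin.snoc (X i) (x i)) (w : Fin m → R)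
    (c : R) : Y *ᵥ Fin.snoc w c = X *ᵥ w + c • x := by
  funext i
  simp [mulVec, dotProduct, hY, Fin.sum_univ_castSucc, mul_comm]

theorem transpose_mulVec_of_rows_eq_snoc [Fintype ι] (hY : ∀ i, Y i = Fin.snoc (X i) (x i))
    (y : ι → R) : Yᵀ *ᵥ y = Fin.snoc (Xᵀ *ᵥ y) (x ⬝ᵥ y) := by
  funext j
  refine Fin.lastCases ?_ (fun j => ?_) j <;> simp [mulVec, dotProduct, hY]

end AppendColumn

theorem mul_gram_inv_mulVec_snoc_sub {ι K : Type*} [Fintype ι] [DecidableEq ι] [Field K] {m : ℕ}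
    {X : Matrix ι (Fin m) K} {x : ι → K} {Y : Matrix ι (Fin (m + 1)) K}
    (hY : ∀ i, Y i = Fin.snoc (X i) (x i)) (hX : IsUnit (Xᵀ * X).det)
    (hYY : IsUnit (Yᵀ * Y).det) (hq : x ⬝ᵥ (1 - X * (Xᵀ * X)⁻¹ * Xᵀ) *ᵥ x ≠ 0)
    (s : Fin m → K) (t : K) :
    (Y * (Yᵀ * Y)⁻¹) *ᵥ Fin.snoc s t - (X * (Xᵀ * X)⁻¹) *ᵥ s =
      ((t - x ⬝ᵥ (X * (Xᵀ * X)⁻¹) *ᵥ s) / (x ⬝ᵥ (1 - X * (Xᵀ * X)⁻¹ * Xᵀ) *ᵥ x)) •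
        (1 - X * (Xᵀ * X)⁻¹ * Xᵀ) *ᵥ x := by
  set r := (1 - X * (Xᵀ * X)⁻¹ * Xᵀ) *ᵥ x
  set c := (t - x ⬝ᵥ (X * (Xᵀ * X)⁻¹) *ᵥ s) / (x ⬝ᵥ r)
  have hr : r = x - X *ᵥ ((Xᵀ * X)⁻¹ *ᵥ (Xᵀ *ᵥ x)) := one_sub_proj_mulVec X x
  have hres : Xᵀ *ᵥ r = 0 := by rw [mulVec_mulVec, transpose_mul_one_sub_proj hX, zero_mulVec]
  have hc : c * (x ⬝ᵥ r) = t - x ⬝ᵥ (X * (Xᵀ * X)⁻¹) *ᵥ s := div_mul_cancel₀ _ hq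
  clear_value r c
  have hfit : Y *ᵥ Fin.snoc ((Xᵀ * X)⁻¹ *ᵥ s - c • ((Xᵀ * X)⁻¹ *ᵥ (Xᵀ *ᵥ x))) c =
      (X * (Xᵀ * X)⁻¹) *ᵥ s + c • r := by
    rw [mulVec_snoc_of_rows_eq_snoc hY, hr, mulVec_sub, mulVec_smul, mulVec_mulVec, smul_sub]
    abel
  rw [sub_eq_iff_eq_add', ← hfit]
  apply mul_gram_inv_mulVec_eq_mulVec hYY
  rw [hfit, transpose_mulVec_of_rows_eq_snoc hY]
  congr 1
  · rw [mulVec_add, mulVec_smul, hres, smul_zero, add_zero, mulVec_mulVec, ← Matrix.mul_assoc,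
      mul_nonsing_inv _ hX, one_mulVec]
  · rw [dotProduct_add, dotProduct_smul, smul_eq_mul, hc]
    ring

theorem spacing_test_weight_general (n m : ℕ)
    (X1 : Matrix (Fin n) (Fin m) ℝ) (xk : Fin n → ℝ)
    (XM : Matrix (Fin n) (Fin (m + 1)) ℝ) (hXMdef : ∀ i, XM i = Fin.snoc (X1 i) (xk i))
    (hX1 : IsUnit (X1ᵀ * X1).det) (hXM : IsUnit (XMᵀ * XM).det)
    (s1 : Fin m → ℝ) (sk : ℝ) (sM : Fin (m + 1) → ℝ) (hsM : sM = Fin.snoc s1 sk)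
    (P1 : Matrix (Fin n) (Fin n) ℝ) (hP1 : P1 = X1 * (X1ᵀ * X1)⁻¹ * X1ᵀ)
    (d : ℝ) (hd : d = sk - xk ⬝ᵥ (X1 * (X1ᵀ * X1)⁻¹).mulVec s1)
    (η : Fin n → ℝ)
    (hη : η = d⁻¹ • ((1 : Matrix (Fin n) (Fin n) ℝ) - P1).mulVec xk)
    (ωk : ℝ)
    (hω : ωk = Real.sqrt
      (((XM * (XMᵀ * XM)⁻¹).mulVec sM - (X1 * (X1ᵀ * X1)⁻¹).mulVec s1) ⬝ᵥ
        ((XM * (XMᵀ * XM)⁻¹).mulVec sM - (X1 * (X1ᵀ * X1)⁻¹).mulVec s1)))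
    (hdenom : xk ⬝ᵥ ((1 : Matrix (Fin n) (Fin n) ℝ) - P1).mulVec xk ≠ 0) :
    Real.sqrt (η ⬝ᵥ η) = ωk⁻¹ ∧
      ωk ^ 2 = d ^ 2 / (xk ⬝ᵥ ((1 : Matrix (Fin n) (Fin n) ℝ) - P1).mulVec xk) := by
  subst hsM hP1 hη hω
  have hstep := mul_gram_inv_mulVec_snoc_sub hXMdef hX1 hXM hdenom s1 sk
  rw [← hd] at hstep
  set r := (1 - X1 * (X1ᵀ * X1)⁻¹ * X1ᵀ) *ᵥ xk
  set q := xk ⬝ᵥ r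
  have hrr : r ⬝ᵥ r = q := dotProduct_self_one_sub_proj_mulVec hX1 xk
  have hq : 0 < q := hdenom.symm.lt_of_le (hrr ▸ by simpa using dotProduct_self_star_nonneg r)
  have hηη : (d⁻¹ • r) ⬝ᵥ (d⁻¹ • r) = q / d ^ 2 := by
    rw [smul_dotProduct, dotProduct_smul, hrr, smul_eq_mul, smul_eq_mul]; ring
  have hvv : ((d / q) • r) ⬝ᵥ ((d / q) • r) = d ^ 2 / q := by
    rw [smul_dotProduct, dotProduct_smul, hrr, smul_eq_mul, smul_eq_mul]; field_simp
  rw [hstep, hηη, hvv, Real.sq_sqrt (by positivity), ← inv_div, Real.sqrt_inv]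
  exact ⟨rfl, rfl⟩

/-- Spacing-test weight (Lemma 4): with
`η = c_k(j_k,s_k) = P^⊥_{k-1}X_{j_k}/(s_k - X_{j_k}ᵀ(X_{M_{k-1}}^+)ᵀ s_{M_{k-1}})` and
`ω_k = ‖(X_{M_k}^+)ᵀ s_{M_k} - (X_{M_{k-1}}^+)ᵀ s_{M_{k-1}}‖₂`, we have `‖η‖₂ = ω_k⁻¹`;
equivalently `ω_k² = (s_k - s_{M_{k-1}}ᵀ X_{M_{k-1}}^+ X_{j_k})² / (X_{j_k}ᵀ P^⊥_{k-1} X_{j_k})`.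
Here `X1 = X_{M_{k-1}}`, `xk = X_{j_k}` and `XM = [X1, xk] = X_{M_k}`. -/
theorem spacing_test_weight (n m : ℕ)
    (X1 : Matrix (Fin n) (Fin m) ℝ) (xk : Fin n → ℝ)
    (XM : Matrix (Fin n) (Fin (m + 1)) ℝ) (hXMdef : ∀ i, XM i = Fin.snoc (X1 i) (xk i))
    (hX1 : IsUnit (X1ᵀ * X1).det) (hXM : IsUnit (XMᵀ * XM).det)
    (s1 : Fin m → ℝ) (sk : ℝ) (sM : Fin (m + 1) → ℝ) (hsM : sM = Fin.snoc s1 sk)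
    (P1 : Matrix (Fin n) (Fin n) ℝ) (hP1 : P1 = X1 * (X1ᵀ * X1)⁻¹ * X1ᵀ)
    (d : ℝ) (hd : d = sk - xk ⬝ᵥ (X1 * (X1ᵀ * X1)⁻¹).mulVec s1) (hd0 : d ≠ 0)
    (η : Fin n → ℝ)
    (hη : η = d⁻¹ • ((1 : Matrix (Fin n) (Fin n) ℝ) - P1).mulVec xk)
    (ωk : ℝ)
    (hω : ωk = Real.sqrt
      (((XM * (XMᵀ * XM)⁻¹).mulVec sM - (X1 * (X1ᵀ * X1)⁻¹).mulVec s1) ⬝ᵥ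
        ((XM * (XMᵀ * XM)⁻¹).mulVec sM - (X1 * (X1ᵀ * X1)⁻¹).mulVec s1)))
    (hdenom : xk ⬝ᵥ ((1 : Matrix (Fin n) (Fin n) ℝ) - P1).mulVec xk ≠ 0) :
    Real.sqrt (η ⬝ᵥ η) = ωk⁻¹ ∧
      ωk ^ 2 = d ^ 2 / (xk ⬝ᵥ ((1 : Matrix (Fin n) (Fin n) ℝ) - P1).mulVec xk) :=
  spacing_test_weight_general n m X1 xk XM hXMdef hX1 hXM s1 sk sM hsM P1 hP1 d hd η hη ωk hω hdenom
end

section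
/- Define h_k(j,s) := (c_k(j,s) − θ c_k(j_k,s_k)) / (1 − θ) with θ = c_k(j,s)ᵀc_k(j_k,s_k)/‖c_k(j_k,s_k)‖². Then for j ∉ M_k, h_k(j,s) = c_{k+1}(j,s), where c_l(j,s) = P^⊥_{l-1}X_j / (s − X_jᵀ(X_{M_{l-1}}^+)ᵀ s_{M_{l-1}}) and M_k = M_{k-1} ∪ {j_k}. -/
/-!
Write `P` for the projection onto the column space of `X1`, `q = (1 - P) xjk` and
`r = (1 - P) xj`, so that `ckk = dk⁻¹ q` and `ck = dj⁻¹ r`. Appending the column `xjk` changes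
`X (XᵀX)⁻¹ z` only by a multiple of `q`: the vector `X1 (X1ᵀX1)⁻¹ w + t q`, with `t` fixed by
its inner product with `xjk`, lies in the column space of `XM` and has `XMᵀ`-image `(w, c)`.
Hence `(1 - PM) xj = r - (q⬝r / q⬝q) q` and `dM = dj - dk (q⬝r) / q⬝q`, while
`θ = dk (q⬝r) / (dj q⬝q)`, so `1 - θ = dM / dj` and the claim is a scalar identity.
-/

open Matrix

section LeastSquares

variable {ι κ R : Type*} [Fintype ι] [Fintype κ] [CommRing R] {X : Matrix ι κ R}

theorem Matrix.mulVec_dotProduct_eq_zero {q : ι → R} (hq : Xᵀ *ᵥ q = 0) (y : κ → R) :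
    (X *ᵥ y) ⬝ᵥ q = 0 := by
  rw [dotProduct_comm, dotProduct_mulVec, ← mulVec_transpose, hq, zero_dotProduct]

variable [DecidableEq κ]

theorem Matrix.transpose_mulVec_mul_inv_mulVec (hX : IsUnit (Xᵀ * X).det) (w : κ → R) :
    Xᵀ *ᵥ ((X * (Xᵀ * X)⁻¹) *ᵥ w) = w := by
  rw [mulVec_mulVec, ← Matrix.mul_assoc, mul_nonsing_inv _ hX, one_mulVec]

theorem Matrix.mul_inv_mulVec_of_transpose_mulVec (hX : IsUnit (Xᵀ * X).det) {y z : κ → R}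
    (hy : Xᵀ *ᵥ (X *ᵥ y) = z) : (X * (Xᵀ * X)⁻¹) *ᵥ z = X *ᵥ y := by
  rw [← hy, mulVec_mulVec, mulVec_mulVec, Matrix.mul_assoc (X * _), Matrix.mul_assoc X,
    nonsing_inv_mul _ hX, Matrix.mul_one]

variable [DecidableEq ι]

theorem Matrix.transpose_mulVec_one_sub_proj (hX : IsUnit (Xᵀ * X).det) (v : ι → R) :
    Xᵀ *ᵥ ((1 - X * (Xᵀ * X)⁻¹ * Xᵀ) *ᵥ v) = 0 := by
  rw [sub_mulVec, one_mulVec, ← mulVec_mulVec, mulVec_sub,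
    transpose_mulVec_mul_inv_mulVec hX, sub_self]

theorem Matrix.dotProduct_one_sub_proj_mulVec (hX : IsUnit (Xᵀ * X).det) (x y : ι → R) :
    x ⬝ᵥ (1 - X * (Xᵀ * X)⁻¹ * Xᵀ) *ᵥ y =
      (1 - X * (Xᵀ * X)⁻¹ * Xᵀ) *ᵥ x ⬝ᵥ (1 - X * (Xᵀ * X)⁻¹ * Xᵀ) *ᵥ y := by
  have hproj : (X * (Xᵀ * X)⁻¹ * Xᵀ) *ᵥ x ⬝ᵥ (1 - X * (Xᵀ * X)⁻¹ * Xᵀ) *ᵥ y = 0 := by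
    rw [← mulVec_mulVec, ← mulVec_mulVec]
    exact mulVec_dotProduct_eq_zero (transpose_mulVec_one_sub_proj hX y) _
  rw [sub_mulVec _ _ x, one_mulVec x, sub_dotProduct, hproj, sub_zero]

end LeastSquares

section AppendColumn

variable {ι R : Type*} [CommRing R] {m : ℕ}
  {X : Matrix ι (Fin m) R} {x : ι → R} {XM : Matrix ι (Fin (m + 1)) R}

theorem Matrix.mulVec_snoc_of_snoc_col (hXM : ∀ i, XM i = Fin.snoc (X i) (x i))
    (w : Fin m → R) (c : R) : XM *ᵥ Fin.snoc w c = X *ᵥ w + c • x := by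
  funext i
  simp only [mulVec, dotProduct, hXM, Fin.sum_univ_castSucc, Fin.snoc_castSucc, Fin.snoc_last,
    Pi.add_apply, Pi.smul_apply, smul_eq_mul, mul_comm c]

theorem Matrix.transpose_mulVec_of_snoc_col [Fintype ι] (hXM : ∀ i, XM i = Fin.snoc (X i) (x i))
    (z : ι → R) : XMᵀ *ᵥ z = Fin.snoc (Xᵀ *ᵥ z) (x ⬝ᵥ z) := by
  funext p
  induction p using Fin.lastCases with
  | last => simp [mulVec, dotProduct, hXM]
  | cast p => simp [mulVec, dotProduct, hXM]

end AppendColumn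

theorem Matrix.mul_inv_mulVec_snoc_of_snoc_col {ι K : Type*} [Fintype ι] [DecidableEq ι] [Field K]
    {m : ℕ} {X : Matrix ι (Fin m) K} {x q : ι → K} {XM : Matrix ι (Fin (m + 1)) K}
    (hXM : ∀ i, XM i = Fin.snoc (X i) (x i)) (hX : IsUnit (Xᵀ * X).det)
    (hXMu : IsUnit (XMᵀ * XM).det) (hq : (1 - X * (Xᵀ * X)⁻¹ * Xᵀ) *ᵥ x = q)
    (hq0 : q ⬝ᵥ q ≠ 0) (w : Fin m → K) (c : K) :
    (XM * (XMᵀ * XM)⁻¹) *ᵥ Fin.snoc w c =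
      (X * (Xᵀ * X)⁻¹) *ᵥ w + ((c - x ⬝ᵥ (X * (Xᵀ * X)⁻¹) *ᵥ w) / (q ⬝ᵥ q)) • q := by
  set t := (c - x ⬝ᵥ (X * (Xᵀ * X)⁻¹) *ᵥ w) / (q ⬝ᵥ q)
  have hXMy : XM *ᵥ Fin.snoc ((Xᵀ * X)⁻¹ *ᵥ w - t • (Xᵀ * X)⁻¹ *ᵥ Xᵀ *ᵥ x) t =
      (X * (Xᵀ * X)⁻¹) *ᵥ w + t • q := by
    rw [mulVec_snoc_of_snoc_col hXM, ← hq]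
    simp only [mulVec_sub, mulVec_smul, mulVec_mulVec, sub_mulVec, one_mulVec, smul_sub,
      Matrix.mul_assoc]
    abel
  refine (mul_inv_mulVec_of_transpose_mulVec hXMu ?_).trans hXMy
  have hxq : x ⬝ᵥ q = q ⬝ᵥ q := by rw [← hq]; exact dotProduct_one_sub_proj_mulVec hX x x
  rw [hXMy, transpose_mulVec_of_snoc_col hXM, mulVec_add, mulVec_smul,
    transpose_mulVec_mul_inv_mulVec hX, ← hq, transpose_mulVec_one_sub_proj hX, smul_zero,
    add_zero, hq, dotProduct_add, dotProduct_smul, hxq, smul_eq_mul]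
  congr 1
  rw [div_mul_cancel₀ _ hq0, add_sub_cancel]

theorem h_eq_c_next_general (n m : ℕ)
    (X1 : Matrix (Fin n) (Fin m) ℝ) (xjk xj : Fin n → ℝ)
    (XM : Matrix (Fin n) (Fin (m + 1)) ℝ) (hXMdef : ∀ i, XM i = Fin.snoc (X1 i) (xjk i))
    (hX1 : IsUnit (X1ᵀ * X1).det) (hXM : IsUnit (XMᵀ * XM).det)
    (s1 : Fin m → ℝ) (sk s : ℝ) (sM : Fin (m + 1) → ℝ) (hsM : sM = Fin.snoc s1 sk)
    (P1 PM : Matrix (Fin n) (Fin n) ℝ)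
    (hP1 : P1 = X1 * (X1ᵀ * X1)⁻¹ * X1ᵀ) (hPM : PM = XM * (XMᵀ * XM)⁻¹ * XMᵀ)
    (dk dj dM : ℝ)
    (hdk : dk = sk - xjk ⬝ᵥ (X1 * (X1ᵀ * X1)⁻¹).mulVec s1)
    (hdj : dj = s - xj ⬝ᵥ (X1 * (X1ᵀ * X1)⁻¹).mulVec s1) (hdj0 : dj ≠ 0)
    (hdM : dM = s - xj ⬝ᵥ (XM * (XMᵀ * XM)⁻¹).mulVec sM) (hdM0 : dM ≠ 0)
    (ck ckk ck1 : Fin n → ℝ)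
    (hck : ck = dj⁻¹ • ((1 : Matrix (Fin n) (Fin n) ℝ) - P1).mulVec xj)
    (hckk : ckk = dk⁻¹ • ((1 : Matrix (Fin n) (Fin n) ℝ) - P1).mulVec xjk)
    (hck1 : ck1 = dM⁻¹ • ((1 : Matrix (Fin n) (Fin n) ℝ) - PM).mulVec xj)
    (θ : ℝ) (hθ : θ = (ck ⬝ᵥ ckk) / (ckk ⬝ᵥ ckk)) (hckk0 : ckk ≠ 0) :
    (1 - θ)⁻¹ • (ck - θ • ckk) = ck1 := by
  subst hP1 hPM hsM
  set q := (1 - X1 * (X1ᵀ * X1)⁻¹ * X1ᵀ) *ᵥ xjk with hq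
  set r := (1 - X1 * (X1ᵀ * X1)⁻¹ * X1ᵀ) *ᵥ xj with hr
  have hdk0 : dk ≠ 0 := by rintro rfl; exact hckk0 (by rw [hckk, _root_.inv_zero, zero_smul])
  have hq0 : q ⬝ᵥ q ≠ 0 := fun h => hckk0 (by rw [hckk, dotProduct_self_eq_zero.mp h, smul_zero])
  have hupdate := mul_inv_mulVec_snoc_of_snoc_col hXMdef hX1 hXM hq.symm hq0
  have hxjk_r : xjk ⬝ᵥ r = q ⬝ᵥ r := dotProduct_one_sub_proj_mulVec hX1 xjk xj
  have hxj_q : xj ⬝ᵥ q = q ⬝ᵥ r :=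
    (dotProduct_one_sub_proj_mulVec hX1 xj xjk).trans (dotProduct_comm _ _)
  have hck1' : ck1 = dM⁻¹ • (r - ((q ⬝ᵥ r) / (q ⬝ᵥ q)) • q) := by
    rw [hck1, sub_mulVec, one_mulVec, ← mulVec_mulVec, transpose_mulVec_of_snoc_col hXMdef,
      hupdate, ← hxjk_r, hr, sub_mulVec, one_mulVec, dotProduct_sub, mulVec_mulVec]
    congr 1
    abel
  have hdM' : dM = dj - dk * (q ⬝ᵥ r) / (q ⬝ᵥ q) := by
    rw [hdM, hupdate, dotProduct_add, dotProduct_smul, hxj_q, ← hdk, hdj, smul_eq_mul]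
    ring
  have hθ' : θ = dk * (q ⬝ᵥ r) / (dj * (q ⬝ᵥ q)) := by
    rw [hθ, hck, hckk]
    simp only [smul_dotProduct, dotProduct_smul, smul_eq_mul, dotProduct_comm r q]
    field_simp
  have h1θ : 1 - θ = dM / dj := by rw [hθ', hdM']; field_simp
  rw [h1θ, hck, hckk, hck1', hθ']
  simp only [smul_sub, smul_smul]
  congr 2 <;> field_simp

/-- Lemma `h_k(j,s) = c_{k+1}(j,s)`: with
`c_l(j,s) = P^⊥_{l-1}X_j/(s - X_jᵀ(X_{M_{l-1}}^+)ᵀ s_{M_{l-1}})`, `M_k = M_{k-1} ∪ {j_k}`,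
`θ = c_k(j,s)ᵀc_k(j_k,s_k)/‖c_k(j_k,s_k)‖²`, and
`h_k(j,s) = (c_k(j,s) - θ c_k(j_k,s_k))/(1 - θ)`, we have `h_k(j,s) = c_{k+1}(j,s)`.
Here `X1 = X_{M_{k-1}}`, `XM = [X1, x_{j_k}] = X_{M_k}`, `xj = X_j` with `j ∉ M_k`. -/
theorem h_eq_c_next (n m : ℕ)
    (X1 : Matrix (Fin n) (Fin m) ℝ) (xjk xj : Fin n → ℝ)
    (XM : Matrix (Fin n) (Fin (m + 1)) ℝ) (hXMdef : ∀ i, XM i = Fin.snoc (X1 i) (xjk i))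
    (hX1 : IsUnit (X1ᵀ * X1).det) (hXM : IsUnit (XMᵀ * XM).det)
    (s1 : Fin m → ℝ) (sk s : ℝ) (sM : Fin (m + 1) → ℝ) (hsM : sM = Fin.snoc s1 sk)
    (P1 PM : Matrix (Fin n) (Fin n) ℝ)
    (hP1 : P1 = X1 * (X1ᵀ * X1)⁻¹ * X1ᵀ) (hPM : PM = XM * (XMᵀ * XM)⁻¹ * XMᵀ)
    (dk dj dM : ℝ)
    (hdk : dk = sk - xjk ⬝ᵥ (X1 * (X1ᵀ * X1)⁻¹).mulVec s1) (hdk0 : dk ≠ 0)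
    (hdj : dj = s - xj ⬝ᵥ (X1 * (X1ᵀ * X1)⁻¹).mulVec s1) (hdj0 : dj ≠ 0)
    (hdM : dM = s - xj ⬝ᵥ (XM * (XMᵀ * XM)⁻¹).mulVec sM) (hdM0 : dM ≠ 0)
    (ck ckk ck1 : Fin n → ℝ)
    (hck : ck = dj⁻¹ • ((1 : Matrix (Fin n) (Fin n) ℝ) - P1).mulVec xj)
    (hckk : ckk = dk⁻¹ • ((1 : Matrix (Fin n) (Fin n) ℝ) - P1).mulVec xjk)
    (hck1 : ck1 = dM⁻¹ • ((1 : Matrix (Fin n) (Fin n) ℝ) - PM).mulVec xj)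
    (θ : ℝ) (hθ : θ = (ck ⬝ᵥ ckk) / (ckk ⬝ᵥ ckk)) (hθ1 : θ ≠ 1) (hckk0 : ckk ≠ 0) :
    (1 - θ)⁻¹ • (ck - θ • ckk) = ck1 :=
  h_eq_c_next_general n m X1 xjk xj XM hXMdef hX1 hXM s1 sk s sM hsM P1 PM hP1 hPM dk dj dM hdk hdj
    hdj0 hdM hdM0 ck ckk ck1 hck hckk hck1 θ hθ hckk0
end
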